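/- Let f(η) = −log(1−|η|) − |η| for η ∈ (−1,1) and fix x ∈ ℝ. The function η ↦ η·x − f(η) attains its maximum over (−1,1) at η* = x/(|x|+1), and |η*| < 1. -/

import Mathlib

/-! With `t = |η|` and `a = |x|` one has `η x ≤ t a`, and the inequality `log y ≤ y - 1` at
`y = (1 - t)(a + 1)` gives `t a + log (1 - t) + t ≤ a - log (a + 1)`. Equality holds at `y = 1`,
i.e. `t = a / (a + 1) = |η*|`, where the objective equals `a - log (a + 1)`. -/

open Real

lemma abs_div_abs_add_one_lt_one (x : ℝ) : |x / (|x| + 1)| < 1 := by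
  have hpos : 0 < |x| + 1 := by positivity
  rw [abs_div, abs_of_pos hpos, div_lt_one hpos]
  linarith

lemma mul_add_log_one_sub_add_le {a t : ℝ} (ha : -1 < a) (ht : t < 1) :
    t * a + log (1 - t) + t ≤ a - log (a + 1) := by
  have hlog := log_le_sub_one_of_pos (mul_pos (sub_pos.2 ht) (neg_lt_iff_pos_add.1 ha))
  rw [log_mul (sub_pos.2 ht).ne' (by linarith)] at hlog
  linarith

lemma log_barrier_objective_at_maximizer (x : ℝ) :
    (x / (|x| + 1)) * x - (-log (1 - |x / (|x| + 1)|) - |x / (|x| + 1)|)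
      = |x| - log (|x| + 1) := by
  have hpos : 0 < |x| + 1 := by positivity
  have hsub : 1 - |x| / (|x| + 1) = (|x| + 1)⁻¹ := by field_simp; ring
  rw [abs_div, abs_of_pos hpos, hsub, log_inv, div_mul_eq_mul_div, ← abs_mul_abs_self x]
  field_simp
  ring

/-- For `f(η) = −log(1−|η|) − |η|` on `(−1,1)` and fixed `x ∈ ℝ`, the map
`η ↦ η·x − f(η)` attains its maximum over `(−1,1)` at `η* = x/(|x|+1)`, and `|η*| < 1`. -/
theorem maximizer_log_barrier (x : ℝ) :
    |x / (|x| + 1)| < 1 ∧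
      ∀ η ∈ Set.Ioo (-1 : ℝ) 1,
        η * x - (-Real.log (1 - |η|) - |η|)
          ≤ (x / (|x| + 1)) * x
              - (-Real.log (1 - |x / (|x| + 1)|) - |x / (|x| + 1)|) := by
  refine ⟨abs_div_abs_add_one_lt_one x, fun η hη => ?_⟩
  have hηx : η * x ≤ |η| * |x| := (le_abs_self _).trans (abs_mul η x).le
  have hbound := mul_add_log_one_sub_add_le (by linarith [abs_nonneg x] : -1 < |x|)
    (abs_lt.2 hη : |η| < 1)
  rw [log_barrier_objective_at_maximizer]
  linarith
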